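/- Let B = ⟨·,·⟩ be an orthogonal-symmetric supertropical bilinear form on a D(ℝ)-submodule V ⊆ D(ℝ)^(n). Then for all v, w ∈ V, either ⟨v,w⟩ + ⟨w,v⟩ ∈ G₀, or both v and w are strictly isotropic, i.e., ⟨v,v⟩ = -∞ and ⟨w,w⟩ = -∞. -/

import Mathlib

noncomputable section

/-- The extended tropical semifield `D(ℝ)`: `bot` is `-∞`; `nb g r` is the element of
underlying value `r : ℝ`, ghost if `g = true`, tangible if `g = false`. -/
inductive DR : Type where
  | bot : DR
  | nb : Bool → ℝ → DR

namespace DR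

/-- Supertropical addition on `D(ℝ)`. -/
def add : DR → DR → DR
  | bot, y => y
  | x, bot => x
  | nb b r, nb c s => if r < s then nb c s else if s < r then nb b r else nb true r

/-- Supertropical multiplication on `D(ℝ)`. -/
def mul : DR → DR → DR
  | bot, _ => bot
  | _, bot => bot
  | nb b r, nb c s => nb (b || c) (r + s)

theorem bot_add (x : DR) : add bot x = x := by cases x <;> rfl

theorem add_bot (x : DR) : add x bot = x := by cases x <;> rfl

theorem bot_mul (x : DR) : mul bot x = bot := by cases x <;> rfl

theorem mul_bot (x : DR) : mul x bot = bot := by cases x <;> rfl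

theorem add_comm' (x y : DR) : add x y = add y x := by
  cases x <;> cases y <;> (try rfl)
  simp only [add]
  split_ifs <;>
    first
      | rfl
      | (exfalso; linarith)
      | (congr 1 <;> first | rfl | linarith)

theorem add_assoc' (x y z : DR) : add (add x y) z = add x (add y z) := by
  cases x with
  | bot => rw [bot_add, bot_add]
  | nb b r =>
    cases y with
    | bot => rw [add_bot, bot_add]
    | nb c s =>
      cases z with
      | bot => rw [add_bot, add_bot]
      | nb d t =>
        simp only [add]
        split_ifs <;>
          simp only [add] <;>
          (try split_ifs) <;>
          first
            | rfl
            | (exfalso; linarith)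
            | (congr 1 <;> first | rfl | linarith)

theorem mul_comm' (x y : DR) : mul x y = mul y x := by
  cases x <;> cases y <;> (try rfl)
  simp [mul, Bool.or_comm, add_comm]

theorem mul_assoc' (x y z : DR) : mul (mul x y) z = mul x (mul y z) := by
  cases x <;> cases y <;> cases z <;> (try rfl) <;>
    simp [mul, Bool.or_assoc, add_assoc]

theorem one_mul' (x : DR) : mul (nb false 0) x = x := by
  cases x <;> simp [mul]

theorem left_distrib' (x y z : DR) : mul x (add y z) = add (mul x y) (mul x z) := by
  cases x with
  | bot => simp [bot_mul, bot_add]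
  | nb b r =>
    cases y with
    | bot => simp [bot_add, mul_bot]
    | nb c s =>
      cases z with
      | bot => simp [add_bot, mul_bot]
      | nb d t =>
        simp only [mul, add]
        split_ifs <;>
          simp only [mul, add, Bool.or_true, Bool.true_or] <;>
          (try split_ifs) <;>
          first
            | rfl
            | (exfalso; linarith)
            | (congr 1 <;> first | rfl | linarith)

theorem right_distrib' (x y z : DR) : mul (add x y) z = add (mul x z) (mul y z) := by
  rw [mul_comm' (add x y) z, left_distrib', mul_comm' z x, mul_comm' z y]

instance : Add DR := ⟨add⟩
instance : Zero DR := ⟨bot⟩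
instance : Mul DR := ⟨mul⟩
instance : One DR := ⟨nb false 0⟩

instance : AddCommMonoid DR where
  add := add
  add_assoc := add_assoc'
  zero := bot
  zero_add := bot_add
  add_zero := add_bot
  add_comm := add_comm'
  nsmul := nsmulRec

instance : CommMonoid DR where
  mul := mul
  mul_assoc := mul_assoc'
  one := nb false 0
  one_mul := one_mul'
  mul_one := fun x => by show mul x (nb false 0) = x; rw [mul_comm']; exact one_mul' x
  mul_comm := mul_comm'
  npow := npowRec

instance : CommSemiring DR where
  __ := (inferInstance : AddCommMonoid DR)
  __ := (inferInstance : CommMonoid DR)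
  left_distrib := left_distrib'
  right_distrib := right_distrib'
  zero_mul := bot_mul
  mul_zero := mul_bot

/-- The ghost ideal `G₀ = ℝ^ν ∪ {-∞}` as a predicate. -/
def IsGhost : DR → Prop
  | bot => True
  | nb b _ => b = true

/-- The tangible elements `T = ℝ` as a predicate. -/
def Tangible : DR → Prop
  | nb false _ => True
  | _ => False

/-- Membership in `T ∪ {-∞}`. -/
def TangibleOrBot (x : DR) : Prop := x = bot ∨ Tangible x

/-- The underlying value in `ℝ ∪ {-∞}`. -/
def val : DR → WithBot ℝ
  | bot => ⊥
  | nb _ r => (r : WithBot ℝ)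

/-- `x ≤_ν y` : comparison of underlying values, `-∞` smallest. -/
def nuLe (x y : DR) : Prop := val x ≤ val y

/-- `x <_ν y` : strict comparison of underlying values, `-∞` smallest. -/
def nuLt (x y : DR) : Prop := val x < val y

/-- The tangible lift `x̂` of `x` (with `hat bot = bot`). -/
def hat : DR → DR
  | bot => bot
  | nb _ r => nb false r

/-- The ghost map `ν`. -/
def nu : DR → DR
  | bot => bot
  | nb _ r => nb true r

/-- The ghost-surpass relation `x ⊨ y` on `D(ℝ)`. -/
def GhostSurp (x y : DR) : Prop := ∃ c : DR, IsGhost c ∧ x = y + c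

end DR

open DR

/-- A vector in `D(ℝ)^(n)` lies in the ghost submodule `G₀^(n)`. -/
def GhostVec {n : ℕ} (v : Fin n → DR) : Prop := ∀ j, IsGhost (v j)

/-- A tangible vector: all entries in `T ∪ {-∞}`. -/
def TangibleVec {n : ℕ} (v : Fin n → DR) : Prop := ∀ j, TangibleOrBot (v j)

/-- The ghost-surpass relation `v ⊨ w` on vectors. -/
def GhostSurpVec {n : ℕ} (v w : Fin n → DR) : Prop :=
  ∃ u : Fin n → DR, GhostVec u ∧ v = w + u

/-- A family of vectors is tropically dependent. -/
def TropDep {ι : Type*} [Fintype ι] {n : ℕ} (w : ι → Fin n → DR) : Prop :=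
  ∃ I : Finset ι, I.Nonempty ∧ ∃ α : ι → DR, (∀ i ∈ I, Tangible (α i)) ∧
    ∀ j : Fin n, IsGhost (∑ i ∈ I, α i * w i j)

/-- A family of vectors is tropically independent. -/
def TropIndep {ι : Type*} [Fintype ι] {n : ℕ} (w : ι → Fin n → DR) : Prop := ¬ TropDep w

/-- A set of vectors is tropically dependent. -/
def SetTropDep {n : ℕ} (S : Set (Fin n → DR)) : Prop :=
  ∃ I : Finset (Fin n → DR), ↑I ⊆ S ∧ I.Nonempty ∧
    ∃ α : (Fin n → DR) → DR, (∀ w ∈ I, Tangible (α w)) ∧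
      ∀ j : Fin n, IsGhost (∑ w ∈ I, α w * w j)

/-- A set of vectors is tropically independent. -/
def SetTropIndep {n : ℕ} (S : Set (Fin n → DR)) : Prop := ¬ SetTropDep S

/-- A d-base of `V`: a maximal tropically independent subset of `V`. -/
def IsDBase {n : ℕ} (V S : Set (Fin n → DR)) : Prop :=
  S ⊆ V ∧ SetTropIndep S ∧ ∀ S', S ⊆ S' → S' ⊆ V → SetTropIndep S' → S' = S

/-- The rank of `V`: the maximal number of elements of a d-base of `V`. -/
noncomputable def trank {n : ℕ} (V : Set (Fin n → DR)) : ℕ :=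
  sSup {m | ∃ S, IsDBase V S ∧ S.Finite ∧ S.ncard = m}

/-- `v` is tropically spanned by `S`. -/
def SpannedBy {n : ℕ} (S : Set (Fin n → DR)) (v : Fin n → DR) : Prop :=
  ∃ I : Finset (Fin n → DR), ↑I ⊆ S ∧ I.Nonempty ∧
    ∃ α : (Fin n → DR) → DR, (∀ w ∈ I, Tangible (α w)) ∧
      GhostSurpVec v (fun j => ∑ w ∈ I, α w * w j)

/-- The tropical determinant (permanent) of a square matrix over `D(ℝ)`. -/
noncomputable def tperm {k : ℕ} (A : Matrix (Fin k) (Fin k) DR) : DR :=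
  ∑ π : Equiv.Perm (Fin k), ∏ i, A (π i) i

/-- A supertropical bilinear form on a subspace `V` of `D(ℝ)^(n)`. -/
structure SupertropicalBilinear (n : ℕ) (V : Set (Fin n → DR)) where
  B : (Fin n → DR) → (Fin n → DR) → DR
  add_left : ∀ u v w, u ∈ V → v ∈ V → w ∈ V → GhostSurp (B (v + w) u) (B v u + B w u)
  add_right : ∀ u v w, u ∈ V → v ∈ V → w ∈ V → GhostSurp (B u (v + w)) (B u v + B u w)
  smul_left : ∀ (α : DR) (v u : Fin n → DR), v ∈ V → u ∈ V → B (α • v) u = α * B v u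
  smul_right : ∀ (α : DR) (u w : Fin n → DR), u ∈ V → w ∈ V → B u (α • w) = α * B u w
  ghost_left : ∀ v w, v ∈ V → w ∈ V → GhostVec v → IsGhost (B v w)
  ghost_right : ∀ v w, v ∈ V → w ∈ V → GhostVec w → IsGhost (B v w)

/-- Orthogonal-symmetry of a supertropical bilinear form. -/
def OrthSym {n : ℕ} {V : Set (Fin n → DR)} (Bl : SupertropicalBilinear n V) : Prop :=
  ∀ (m : ℕ) (v : Fin m → Fin n → DR) (w : Fin n → DR), (∀ i, v i ∈ V) → w ∈ V →
    (IsGhost (∑ i, Bl.B (v i) w) ↔ IsGhost (∑ i, Bl.B w (v i)))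

/-! If `⟨v,w⟩` is ghost then so is `⟨w,v⟩` (orthogonal symmetry for a single vector), and the
sum is ghost. Otherwise both are tangible, and the sum is ghost unless their values `r`, `s`
differ, say `r < s`. Testing orthogonal symmetry on the pair `v, λw` against `w` compares the
ghostness of `⟨v,w⟩ + λ⟨w,w⟩` and `⟨w,v⟩ + λ⟨w,w⟩`. If `⟨w,w⟩ ≠ -∞`, a tangible `λ` moving
`λ⟨w,w⟩` to value `s` (when `⟨w,w⟩` is tangible) or strictly between `r` and `s` (when it is
ghost) makes exactly one of the two sums ghost, a contradiction. Hence `⟨w,w⟩ = -∞`, and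
symmetrically `⟨v,v⟩ = -∞`. -/

namespace DR

theorem add_def (x y : DR) : x + y = add x y := rfl

theorem nb_mul_nb (a b : Bool) (r s : ℝ) : (nb a r * nb b s : DR) = nb (a || b) (r + s) := rfl

theorem nb_add_nb_of_lt (b c : Bool) {r s : ℝ} (h : r < s) : (nb b r + nb c s : DR) = nb c s := by
  simp [add_def, add, h]

theorem nb_add_nb_of_gt (b c : Bool) {r s : ℝ} (h : s < r) : (nb b r + nb c s : DR) = nb b r := by
  rw [add_comm, nb_add_nb_of_lt _ _ h]

theorem nb_add_nb_self (b c : Bool) (r : ℝ) : (nb b r + nb c r : DR) = nb true r := by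
  simp [add_def, add]

theorem isGhost_add {x y : DR} (hx : IsGhost x) (hy : IsGhost y) : IsGhost (x + y) := by
  cases x <;> cases y <;> simp only [add_def, add, IsGhost] at * <;> (try split_ifs) <;>
    simp_all

theorem exists_eq_nb_false_of_not_isGhost {x : DR} (h : ¬ IsGhost x) : ∃ r, x = nb false r := by
  rcases x with _ | ⟨_ | _, r⟩
  · exact absurd trivial h
  · exact ⟨r, rfl⟩
  · exact absurd rfl h

theorem exists_xor_isGhost_add_mul_of_lt {r s : ℝ} (hrs : r < s) {z : DR} (hz : z ≠ 0) :
    ∃ α, Xor (IsGhost (nb false r + α * z)) (IsGhost (nb false s + α * z)) := by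
  obtain _ | ⟨_ | _, t⟩ := z
  · exact absurd rfl hz
  · refine ⟨nb false (s - t), Or.inr ⟨?_, ?_⟩⟩ <;>
      simp [nb_mul_nb, nb_add_nb_of_lt _ _ hrs, nb_add_nb_self, IsGhost]
  · have hr : r < (r + s) / 2 := by linarith
    have hs : (r + s) / 2 < s := by linarith
    refine ⟨nb false ((r + s) / 2 - t), Or.inl ⟨?_, ?_⟩⟩ <;>
      simp [nb_mul_nb, nb_add_nb_of_lt _ _ hr, nb_add_nb_of_gt _ _ hs, IsGhost]

theorem exists_xor_isGhost_add_mul {r s : ℝ} (hrs : r ≠ s) {z : DR} (hz : z ≠ 0) :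
    ∃ α, Xor (IsGhost (nb false r + α * z)) (IsGhost (nb false s + α * z)) := by
  rcases hrs.lt_or_gt with h | h
  · exact exists_xor_isGhost_add_mul_of_lt h hz
  · obtain ⟨α, hα⟩ := exists_xor_isGhost_add_mul_of_lt h hz
    exact ⟨α, hα.symm⟩

end DR

namespace OrthSym

variable {n : ℕ} {V : Submodule DR (Fin n → DR)}
  {Bl : SupertropicalBilinear n (V : Set (Fin n → DR))}

theorem isGhost_comm (hsym : OrthSym Bl) {v w : Fin n → DR} (hv : v ∈ V) (hw : w ∈ V) :
    IsGhost (Bl.B v w) ↔ IsGhost (Bl.B w v) := by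
  simpa using hsym 1 ![v] w (Fin.forall_fin_one.mpr hv) hw

theorem isGhost_add_mul_comm (hsym : OrthSym Bl) {v w : Fin n → DR} (hv : v ∈ V) (hw : w ∈ V)
    (α : DR) :
    IsGhost (Bl.B v w + α * Bl.B w w) ↔ IsGhost (Bl.B w v + α * Bl.B w w) := by
  have hmem : ∀ i, ![v, α • w] i ∈ (V : Set (Fin n → DR)) := by
    intro i
    fin_cases i
    exacts [hv, V.smul_mem α hw]
  have h := hsym 2 ![v, α • w] w hmem hw
  simpa [Fin.sum_univ_two, Bl.smul_left _ _ _ hw hw, Bl.smul_right _ _ _ hw hw] using h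

theorem B_self_eq_zero_of_ne (hsym : OrthSym Bl) {v w : Fin n → DR} (hv : v ∈ V) (hw : w ∈ V)
    {r s : ℝ} (hvw : Bl.B v w = nb false r) (hwv : Bl.B w v = nb false s) (hrs : r ≠ s) :
    Bl.B w w = 0 := by
  by_contra hz
  obtain ⟨α, hα⟩ := DR.exists_xor_isGhost_add_mul hrs hz
  rw [← hvw, ← hwv, xor_iff_not_iff] at hα
  exact hα (hsym.isGhost_add_mul_comm hv hw α)

end OrthSym

/-- For an orthogonal-symmetric supertropical bilinear form, either
`⟨v,w⟩ + ⟨w,v⟩` is ghost, or both `v` and `w` are strictly isotropic. -/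
theorem orthsym_ghost_or_strictly_isotropic (n : ℕ)
    (V : Submodule DR (Fin n → DR))
    (Bl : SupertropicalBilinear n (V : Set (Fin n → DR)))
    (hsym : OrthSym Bl) :
    ∀ v ∈ V, ∀ w ∈ V,
      IsGhost (Bl.B v w + Bl.B w v) ∨ (Bl.B v v = 0 ∧ Bl.B w w = 0) := by
  intro v hv w hw
  by_cases hg : IsGhost (Bl.B v w)
  · exact Or.inl (DR.isGhost_add hg ((hsym.isGhost_comm hv hw).mp hg))
  obtain ⟨r, hvw⟩ := DR.exists_eq_nb_false_of_not_isGhost hg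
  obtain ⟨s, hwv⟩ := DR.exists_eq_nb_false_of_not_isGhost (mt (hsym.isGhost_comm hv hw).mpr hg)
  by_cases hrs : r = s
  · left
    rw [hvw, hwv, hrs, DR.nb_add_nb_self]
    trivial
  · exact Or.inr ⟨hsym.B_self_eq_zero_of_ne hw hv hwv hvw (Ne.symm hrs),
      hsym.B_self_eq_zero_of_ne hv hw hvw hwv hrs⟩
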